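/- arXiv:1010.0416 — 2 statements merged into one kernel-verified Lean document; each statement's English description precedes it below -/
import Mathlib

section
/- For all integers m ≥ 2, the sequence {i(i+1)(d_i(m)² − d_{i-1}(m)d_{i+1}(m))}_{1 ≤ i ≤ m} attains its minimum at i = m, where it equals 2^{-2m} · m(m+1) · C(2m, m)². -/
open Finset

noncomputable def d (m : ℕ) (i : ℤ) : ℝ :=
  if 0 ≤ i ∧ i ≤ (m : ℤ) then
    ((2 : ℝ) ^ (2 * m))⁻¹ *
      ∑ k ∈ Finset.Icc i.toNat m,
        2 ^ k * (Nat.choose (2 * m - 2 * k) (m - k) : ℝ) *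
          (Nat.choose (m + k) k : ℝ) * (Nat.choose k i.toNat : ℝ)
  else 0

/-!
Write `d_i(m) = 2^{-2m} T_i` with `T_i = ∑ₖ cₖ C(k, i)` the binomial transform of the weights
`cₖ = 2^k C(2m-2k, m-k) C(m+k, k)`, which are nondecreasing in `k ≤ m`. For any nonnegative
nondecreasing `c` on `[0, N]`, the minors `T_{i+1} T_j - T_i T_{j+1}` (`i ≤ j ≤ N`) dominate
`c_N²` times the same minors of the row `C(N, ·)`: Pascal's rule writes a minor at level `N + 1`
as a sum of four minors at level `N`, except at `i = 0`, where the leftover term is absorbed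
using `c₀ ≤ cₖ`. For the binomial row, `i(i+1)(C(m,i)² - C(m,i-1) C(m,i+1)) = (m+1) i C(m,i)² / (m-i+1)`,
which is at least `m(m+1)`, its value at `i = m`; and at `i = m` the minor of `T` is exactly `c_m²`.
-/

namespace BorosMoll

section Semiring

variable {R : Type*} [Semiring R]

def binomialTransform (c : ℕ → R) (N i : ℕ) : R :=
  ∑ k ∈ range (N + 1), c k * k.choose i

variable (c : ℕ → R) (N : ℕ)

theorem binomialTransform_eq_zero_of_lt {i : ℕ} (h : N < i) : binomialTransform c N i = 0 :=
  sum_eq_zero fun k hk => by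
    rw [Nat.choose_eq_zero_of_lt (by grind), Nat.cast_zero, mul_zero]

theorem binomialTransform_self : binomialTransform c N N = c N := by
  rw [binomialTransform, sum_range_succ, sum_eq_zero fun k hk => ?_]
  · simp
  · rw [Nat.choose_eq_zero_of_lt (by grind), Nat.cast_zero, mul_zero]

theorem binomialTransform_succ_succ (i : ℕ) :
    binomialTransform c (N + 1) (i + 1) =
      binomialTransform (fun k => c (k + 1)) N (i + 1) +
        binomialTransform (fun k => c (k + 1)) N i := by
  rw [binomialTransform, sum_range_succ']
  simp only [Nat.choose_succ_succ', Nat.cast_add, mul_add, sum_add_distrib, Nat.choose_zero_succ,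
    Nat.cast_zero, mul_zero, add_zero]
  exact add_comm _ _

theorem binomialTransform_succ_zero :
    binomialTransform c (N + 1) 0 = binomialTransform (fun k => c (k + 1)) N 0 + c 0 := by
  simp [binomialTransform, sum_range_succ' _ (N + 1)]

theorem binomialTransform_zero_add_one :
    binomialTransform c N 0 + binomialTransform c N 1 = ∑ k ∈ range (N + 1), c k * (k + 1) := by
  simp [binomialTransform, ← sum_add_distrib, mul_add, add_comm]

end Semiring

theorem _root_.Nat.sum_range_add_one_eq_choose_two (N : ℕ) :
    ∑ k ∈ range N, (k + 1) = (N + 1).choose 2 := by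
  rw [Nat.choose_two_right, ← sum_range_id, sum_range_succ']
  rfl

theorem _root_.Nat.choose_two_mul_choose_succ_le {k N : ℕ} (hk : k ≤ N) (j : ℕ) :
    (j + 2).choose 2 * (k + 1).choose (j + 2) ≤ (N + 1).choose 2 * k.choose j := by
  rcases lt_or_ge (k + 1) (j + 2) with hlt | hle
  · simp [Nat.choose_eq_zero_of_lt hlt]
  rw [mul_comm, Nat.choose_mul (by omega : 2 ≤ j + 2), Nat.add_sub_cancel]
  exact Nat.mul_le_mul (Nat.choose_le_choose 2 (by omega)) (Nat.choose_le_choose j (by omega))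

theorem _root_.Nat.mul_sub_le_succ_mul_choose_sq {m i : ℕ} (hi : i < m) :
    m * (m - i) ≤ (i + 1) * m.choose (i + 1) ^ 2 := by
  obtain ⟨n, rfl⟩ : ∃ n, m = n + 1 := ⟨m - 1, by omega⟩
  have h1 : n + 1 ≤ (i + 1) * (n + 1).choose (i + 1) := by
    rw [mul_comm, ← Nat.add_one_mul_choose_eq]
    exact Nat.le_mul_of_pos_right _ (Nat.choose_pos (by omega))
  have h2 : n + 1 - i ≤ (n + 1).choose (i + 1) := by
    rw [← Nat.choose_symm (by omega), show n + 1 - (i + 1) = n - i by omega]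
    calc n + 1 - i = (n - i + 1).choose (n - i) := by rw [Nat.choose_succ_self_right]; omega
      _ ≤ (n + 1).choose (n - i) := Nat.choose_le_choose _ (by omega)
  calc (n + 1) * (n + 1 - i) ≤ ((i + 1) * (n + 1).choose (i + 1)) * (n + 1).choose (i + 1) :=
        Nat.mul_le_mul h1 h2
    _ = (i + 1) * (n + 1).choose (i + 1) ^ 2 := by ring

section Ordered

variable {R : Type*} [CommRing R] [LinearOrder R] [IsStrictOrderedRing R] (c : ℕ → R) (N : ℕ)

local notation "T" => binomialTransform c N

theorem mul_choose_le_binomialTransform (hc : ∀ k ≤ N, 0 ≤ c k) (i : ℕ) :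
    c N * N.choose i ≤ T i :=
  single_le_sum (f := fun k => c k * k.choose i)
    (fun k hk => mul_nonneg (hc k (by grind)) (Nat.cast_nonneg _)) (self_mem_range_succ N)

theorem choose_two_mul_binomialTransform_add_le (hc : ∀ k ≤ N, 0 ≤ c k) (j : ℕ) :
    ((j + 2).choose 2 : R) * (T (j + 1) + T (j + 2)) ≤ (N + 1).choose 2 * T j := by
  simp only [binomialTransform, ← sum_add_distrib, mul_sum]
  refine sum_le_sum fun k hk => ?_
  have hk : k ≤ N := by grind
  calc ((j + 2).choose 2 : R) * (c k * (k.choose (j + 1) : ℕ) + c k * (k.choose (j + 2) : ℕ))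
      = c k * ((j + 2).choose 2 * (k + 1).choose (j + 2) : ℕ) := by
        rw [Nat.choose_succ_succ' k (j + 1)]; push_cast; ring
    _ ≤ c k * ((N + 1).choose 2 * k.choose j : ℕ) :=
        mul_le_mul_of_nonneg_left (by exact_mod_cast Nat.choose_two_mul_choose_succ_le hk j)
          (hc k hk)
    _ = (N + 1).choose 2 * (c k * k.choose j) := by push_cast; ring

theorem add_one_mul_add_choose_two_mul_le {a : R} (hc : ∀ k ≤ N, a ≤ c k) :
    (N + 1) * c N + (N + 1).choose 2 * a ≤ T 0 + T 1 := by
  rw [binomialTransform_zero_add_one, sum_range_succ, ← Nat.sum_range_add_one_eq_choose_two,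
    Nat.cast_sum, sum_mul]
  have : ∑ k ∈ range N, ((k + 1 : ℕ) : R) * a ≤ ∑ k ∈ range N, c k * (k + 1) :=
    sum_le_sum fun k hk => by
      rw [mul_comm, Nat.cast_succ]
      exact mul_le_mul_of_nonneg_right (hc k (by grind)) (by positivity)
  linarith

/-- Controls the extra term that Pascal's rule leaves in a minor at `i = 0`. -/
theorem absorption {a : R} (ha : 0 ≤ a) (hc : ∀ k ≤ N, a ≤ c k) (j : ℕ) :
    (N + 1) * c N ^ 2 * N.choose j + a * (T (j + 1) + T (j + 2)) ≤ (T 0 + T 1) * T j := by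
  have hc0 : ∀ k ≤ N, 0 ≤ c k := fun k hk => ha.trans (hc k hk)
  have hcN := hc0 N le_rfl
  have hB : (1 : R) ≤ (j + 2).choose 2 := by
    exact_mod_cast Nat.choose_pos (by omega : 2 ≤ j + 2)
  have hTj : 0 ≤ T j := (mul_nonneg hcN (Nat.cast_nonneg _)).trans
    (mul_choose_le_binomialTransform c N hc0 j)
  have h2 := mul_le_mul_of_nonneg_left (choose_two_mul_binomialTransform_add_le c N hc0 j) ha
  have h3 := mul_le_mul_of_nonneg_left
    (mul_le_mul_of_nonneg_right (add_one_mul_add_choose_two_mul_le c N hc) hTj)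
    (by positivity : (0 : R) ≤ (j + 2).choose 2)
  have h4 := mul_le_mul_of_nonneg_left (mul_choose_le_binomialTransform c N hc0 j)
    (by positivity : (0 : R) ≤ (j + 2).choose 2 * (N + 1) * c N)
  have h5 : 0 ≤ ((j + 2).choose 2 - 1 : R) * (a * ((N + 1).choose 2 * T j)) := by
    have := sub_nonneg.2 hB
    positivity
  refine le_of_mul_le_mul_left ?_ (by linarith : (0 : R) < (j + 2).choose 2)
  linarith

end Ordered

section Minor

variable {R : Type*} [CommRing R]

def minor (f : ℕ → R) (i j : ℕ) : R :=
  f (i + 1) * f j - f i * f (j + 1)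

theorem minor_self (f : ℕ → R) (i : ℕ) : minor f i i = 0 := by
  rw [minor, mul_comm, sub_self]

theorem minor_const_mul (a : R) (f : ℕ → R) (i j : ℕ) :
    minor (fun n => a * f n) i j = a ^ 2 * minor f i j := by
  simp only [minor]; ring

variable {f g : ℕ → R}

theorem minor_succ_succ_of_pascal (h : ∀ n, f (n + 1) = g (n + 1) + g n) (i j : ℕ) :
    minor f (i + 1) (j + 1) =
      minor g (i + 1) (j + 1) + minor g i j + minor g (i + 1) j + minor g i (j + 1) := by
  simp only [minor, h]; ring

theorem minor_zero_succ_of_pascal (h : ∀ n, f (n + 1) = g (n + 1) + g n) {a : R}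
    (h0 : f 0 = g 0 + a) (j : ℕ) :
    minor f 0 (j + 1) = minor g 0 (j + 1) + (g 0 + g 1) * g j - a * (g (j + 1) + g (j + 2)) := by
  simp only [minor, h, h0]; ring

end Minor

section Comparison

variable {R : Type*} [CommRing R] [LinearOrder R] [IsStrictOrderedRing R]

theorem sq_mul_minor_choose_le_minor_binomialTransform_top {c : ℕ → R} {N : ℕ}
    (hc : ∀ k ≤ N, 0 ≤ c k) (i : ℕ) :
    c N ^ 2 * minor (fun n => (N.choose n : R)) i N ≤ minor (binomialTransform c N) i N := by
  have := mul_le_mul_of_nonneg_left (mul_choose_le_binomialTransform c N hc (i + 1)) (hc N le_rfl)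
  simp only [minor, binomialTransform_self,
    binomialTransform_eq_zero_of_lt c N (Nat.lt_succ_self N), Nat.choose_self,
    Nat.choose_succ_self]
  push_cast
  linarith

theorem sq_mul_minor_choose_le_minor_binomialTransform {N : ℕ} {c : ℕ → R} (hc0 : 0 ≤ c 0)
    (hc : MonotoneOn c (Set.Iic N)) {i j : ℕ} (hij : i ≤ j) (hjN : j ≤ N) :
    c N ^ 2 * minor (fun n => (N.choose n : R)) i j ≤ minor (binomialTransform c N) i j := by
  induction N generalizing c i j with
  | zero =>
    obtain rfl : j = 0 := by omega
    exact sq_mul_minor_choose_le_minor_binomialTransform_top (fun k hk => by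
      rwa [Nat.le_zero.1 hk]) i
  | succ N ih =>
    have hnonneg : ∀ k ≤ N + 1, 0 ≤ c k := fun k hk =>
      hc0.trans (hc (Set.mem_Iic.2 (Nat.zero_le _)) (Set.mem_Iic.2 hk) (Nat.zero_le k))
    rcases hjN.lt_or_eq with hjN | rfl
    swap; · exact sq_mul_minor_choose_le_minor_binomialTransform_top hnonneg i
    rcases hij.lt_or_eq with hij | rfl
    swap; · simp [minor_self]
    obtain ⟨j, rfl⟩ : ∃ j', j = j' + 1 := ⟨j - 1, by omega⟩
    set c' : ℕ → R := fun k => c (k + 1)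
    have hc' : MonotoneOn c' (Set.Iic N) := fun a ha b hb hab =>
      hc (by simp at *; omega) (by simp at *; omega) (by omega)
    have ih' : ∀ i j, i ≤ j → j ≤ N →
        c (N + 1) ^ 2 * minor (fun n => (N.choose n : R)) i j ≤
          minor (binomialTransform c' N) i j := fun i j hij hjN =>
      ih (hnonneg 1 (by omega)) hc' hij hjN
    have hT := binomialTransform_succ_succ c N
    have hC : ∀ n, ((N + 1).choose (n + 1) : R) = N.choose (n + 1) + N.choose n := fun n => by
      rw [Nat.choose_succ_succ', Nat.cast_add, add_comm]
    rcases i with _ | i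
    · rw [minor_zero_succ_of_pascal (g := fun n => (N.choose n : R)) hC (a := 0) (by simp),
        minor_zero_succ_of_pascal hT (binomialTransform_succ_zero c N)]
      have h1 := ih' 0 (j + 1) (by omega) (by omega)
      have h2 := absorption c' N (hnonneg 0 (by omega))
        (fun k hk => hc (by simp) (by simp; omega) (by omega)) j
      simp only [Nat.choose_zero_right, Nat.choose_one_right, Nat.cast_one] at h1 h2 ⊢
      linarith
    · rw [minor_succ_succ_of_pascal (g := fun n => (N.choose n : R)) hC,
        minor_succ_succ_of_pascal hT]
      have h1 := ih' (i + 1) (j + 1) (by omega) (by omega)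
      have h2 := ih' i j (by omega) (by omega)
      have h3 := ih' (i + 1) j (by omega) (by omega)
      have h4 := ih' i (j + 1) (by omega) (by omega)
      linarith

theorem mul_add_one_le_minor_choose {m i : ℕ} (hi : i < m) :
    (m : R) * (m + 1) ≤ (i + 1) * (i + 2) * minor (fun n => (m.choose n : R)) i (i + 1) := by
  obtain ⟨l, rfl⟩ : ∃ l, m = i + 1 + l := ⟨m - i - 1, by omega⟩
  have hA : ((i + 1 + l).choose (i + 1) * (i + 1) : R) = (i + 1 + l).choose i * (l + 1) := by
    exact_mod_cast (Nat.choose_succ_right_eq _ i).trans (by congr 1; omega)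
  have hB : ((i + 1 + l).choose (i + 2) * (i + 2) : R) = (i + 1 + l).choose (i + 1) * l := by
    exact_mod_cast (Nat.choose_succ_right_eq _ (i + 1)).trans (by congr 1; omega)
  have hsq : ((i + 1 + l : ℕ) : R) * (l + 1) ≤ (i + 1) * (i + 1 + l).choose (i + 1) ^ 2 := by
    exact_mod_cast (Nat.mul_sub_le_succ_mul_choose_sq (by omega : i < i + 1 + l)).trans_eq'
      (by congr 1; omega)
  refine le_of_mul_le_mul_left ?_ (by positivity : (0 : R) < l + 1)
  calc ((l : R) + 1) * ((i + 1 + l : ℕ) * ((i + 1 + l : ℕ) + 1))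
      = ((i + 1 + l : ℕ) + 1) * ((i + 1 + l : ℕ) * (l + 1)) := by ring
    _ ≤ ((i + 1 + l : ℕ) + 1) * ((i + 1) * (i + 1 + l).choose (i + 1) ^ 2) :=
        mul_le_mul_of_nonneg_left hsq (by positivity)
    _ = (l + 1) * ((i + 1) * (i + 2) * minor (fun n => ((i + 1 + l).choose n : R)) i (i + 1)) := by
        simp only [minor]
        push_cast
        linear_combination ((i + 1) ^ 2 * ((i + 1 + l).choose (i + 1) : R)) * hB
          - ((i + 1) * (i + 2) * ((i + 1 + l).choose (i + 2) : R)) * hA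

theorem mul_add_one_mul_sq_le_minor_binomialTransform {N : ℕ} {c : ℕ → R} (hc0 : 0 ≤ c 0)
    (hc : MonotoneOn c (Set.Iic N)) {i : ℕ} (hi : i < N) :
    (N : R) * (N + 1) * c N ^ 2 ≤ (i + 1) * (i + 2) * minor (binomialTransform c N) i (i + 1) :=
  calc (N : R) * (N + 1) * c N ^ 2
      ≤ (i + 1) * (i + 2) * minor (fun n => (N.choose n : R)) i (i + 1) * c N ^ 2 :=
        mul_le_mul_of_nonneg_right (mul_add_one_le_minor_choose hi) (sq_nonneg _)
    _ = (i + 1) * (i + 2) * (c N ^ 2 * minor (fun n => (N.choose n : R)) i (i + 1)) := by ring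
    _ ≤ (i + 1) * (i + 2) * minor (binomialTransform c N) i (i + 1) :=
        mul_le_mul_of_nonneg_left
          (sq_mul_minor_choose_le_minor_binomialTransform hc0 hc (by omega) hi) (by positivity)

end Comparison

def weight (m k : ℕ) : ℕ :=
  2 ^ k * (2 * m - 2 * k).choose (m - k) * (m + k).choose k

theorem weight_self (m : ℕ) : weight m m = 2 ^ m * (2 * m).choose m := by
  simp [weight, two_mul]

theorem weight_le_weight_succ {m k : ℕ} (hk : k < m) : weight m k ≤ weight m (k + 1) := by
  obtain ⟨j, rfl⟩ : ∃ j, m = k + j + 1 := ⟨m - k - 1, by omega⟩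
  have hB := Nat.succ_mul_centralBinom_succ j
  have hA := Nat.add_one_mul_choose_eq (k + j + 1 + k) k
  rw [weight, weight, show 2 * (k + j + 1) - 2 * k = 2 * (j + 1) by omega,
    show k + j + 1 - k = j + 1 by omega, show 2 * (k + j + 1) - 2 * (k + 1) = 2 * j by omega,
    show k + j + 1 - (k + 1) = j by omega, ← Nat.centralBinom_eq_two_mul_choose,
    ← Nat.centralBinom_eq_two_mul_choose, ← add_assoc]
  refine Nat.le_of_mul_le_mul_left ?_ (by positivity : 0 < (j + 1) * (k + 1))
  have hscalar : (k + 1) * (2 * j + 1) ≤ (j + 1) * (k + j + 1 + k + 1) := by nlinarith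
  calc (j + 1) * (k + 1) * (2 ^ k * (j + 1).centralBinom * (k + j + 1 + k).choose k)
      = 2 ^ (k + 1) * j.centralBinom * (k + j + 1 + k).choose k * ((k + 1) * (2 * j + 1)) := by
        rw [show ∀ a b c : ℕ, (j + 1) * (k + 1) * (a * b * c) = a * (k + 1) * c * ((j + 1) * b) by
          intros; ring, hB]
        ring
    _ ≤ 2 ^ (k + 1) * j.centralBinom * (k + j + 1 + k).choose k * ((j + 1) * (k + j + 1 + k + 1)) :=
        Nat.mul_le_mul_left _ hscalar
    _ = (j + 1) * (k + 1) * (2 ^ (k + 1) * j.centralBinom * (k + j + 1 + k + 1).choose (k + 1)) := by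
        rw [show ∀ a b c : ℕ, a * b * c * ((j + 1) * (k + j + 1 + k + 1)) =
          a * b * (j + 1) * ((k + j + 1 + k + 1) * c) by intros; ring, hA]
        ring

theorem monotoneOn_weight (m : ℕ) : MonotoneOn (fun k => (weight m k : ℝ)) (Set.Iic m) :=
  monotoneOn_of_le_add_one Set.ordConnected_Iic fun _ _ _ hk =>
    Nat.cast_le.2 (weight_le_weight_succ (Set.mem_Iic.1 hk))

theorem d_natCast (m n : ℕ) :
    d m n = ((2 : ℝ) ^ (2 * m))⁻¹ * binomialTransform (fun k => (weight m k : ℝ)) m n := by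
  rcases le_or_gt n m with hn | hn
  · rw [d, if_pos (by omega), Int.toNat_natCast, binomialTransform]
    congr 1
    refine sum_subset (s₂ := range (m + 1)) (fun k hk => by grind) (fun k hk hkn => ?_) |>.trans ?_
    · rw [Nat.choose_eq_zero_of_lt (show k < n by grind), Nat.cast_zero, mul_zero]
    · simp [weight]
  · rw [d, if_neg (by omega), binomialTransform_eq_zero_of_lt _ _ hn, mul_zero]

theorem d_sq_sub_mul_eq_minor (m n : ℕ) :
    d m (n + 1 : ℕ) ^ 2 - d m ((n + 1 : ℕ) - 1) * d m ((n + 1 : ℕ) + 1) =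
      ((2 : ℝ) ^ (2 * m))⁻¹ ^ 2 *
        minor (binomialTransform (fun k => (weight m k : ℝ)) m) n (n + 1) := by
  rw [show ((n + 1 : ℕ) : ℤ) - 1 = n by push_cast; ring,
    show ((n + 1 : ℕ) : ℤ) + 1 = (n + 1 + 1 : ℕ) by push_cast; ring, d_natCast, d_natCast,
    d_natCast, ← minor_const_mul, minor, sq]

theorem d_sq_sub_mul_self (m : ℕ) :
    d m m ^ 2 - d m (m - 1) * d m (m + 1) = (((2 : ℝ) ^ (2 * m))⁻¹ * weight m m) ^ 2 := by
  rw [show (m : ℤ) + 1 = (m + 1 : ℕ) by push_cast; ring, d_natCast m m, d_natCast m (m + 1),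
    binomialTransform_self, binomialTransform_eq_zero_of_lt _ m (lt_add_one m)]
  ring

end BorosMoll

open BorosMoll

theorem boros_moll_minimum_general (m : ℕ) :
    (∀ i : ℤ, 1 ≤ i → i ≤ (m : ℤ) →
      ((m : ℝ) * (m + 1)) * (d m m ^ 2 - d m (m - 1) * d m (m + 1))
        ≤ (i * (i + 1) : ℝ) * (d m i ^ 2 - d m (i - 1) * d m (i + 1))) ∧
    ((m : ℝ) * (m + 1)) * (d m m ^ 2 - d m (m - 1) * d m (m + 1))
      = ((2 : ℝ) ^ (2 * m))⁻¹ * (m * (m + 1)) * (Nat.choose (2 * m) m : ℝ) ^ 2 := by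
  set κ : ℝ := ((2 : ℝ) ^ (2 * m))⁻¹
  rw [d_sq_sub_mul_self]
  refine ⟨fun i hi him => ?_, ?_⟩
  · obtain ⟨n, rfl⟩ : ∃ n : ℕ, i = (n + 1 : ℕ) := ⟨(i - 1).toNat, by omega⟩
    have := mul_add_one_mul_sq_le_minor_binomialTransform (c := fun k => (weight m k : ℝ))
      (by positivity) (monotoneOn_weight m) (by omega : n < m)
    rw [d_sq_sub_mul_eq_minor]
    push_cast
    calc (m : ℝ) * (m + 1) * (κ * weight m m) ^ 2
        = κ ^ 2 * ((m : ℝ) * (m + 1) * (weight m m : ℝ) ^ 2) := by ring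
      _ ≤ κ ^ 2 * ((n + 1) * (n + 2) *
            minor (binomialTransform (fun k => (weight m k : ℝ)) m) n (n + 1)) := by gcongr
      _ = _ := by ring
  · have hκ : κ * (2 ^ m) ^ 2 = 1 := by
      rw [← pow_mul, mul_comm m 2]
      exact inv_mul_cancel₀ (by positivity)
    rw [weight_self]
    push_cast
    linear_combination (κ * (m * (m + 1)) * ((2 * m).choose m : ℝ) ^ 2) * hκ

theorem boros_moll_minimum (m : ℕ) (hm : 2 ≤ m) :
    (∀ i : ℤ, 1 ≤ i → i ≤ (m : ℤ) →
      ((m : ℝ) * (m + 1)) * (d m m ^ 2 - d m (m - 1) * d m (m + 1))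
        ≤ (i * (i + 1) : ℝ) * (d m i ^ 2 - d m (i - 1) * d m (i + 1))) ∧
    ((m : ℝ) * (m + 1)) * (d m m ^ 2 - d m (m - 1) * d m (m + 1))
      = ((2 : ℝ) ^ (2 * m))⁻¹ * (m * (m + 1)) * (Nat.choose (2 * m) m : ℝ) ^ 2 :=
  boros_moll_minimum_general m
end

section
/- For all integers m ≥ 2 and 1 ≤ i ≤ m−1, the recurrence d_{i-1}(m) = ((m+1)/(m+i)) · d_i(m+1) − ((4m+2i+3)/(2(m+i))) · d_i(m) holds. -/
/-!
Write `c m k = bmCoeff m k = 2 ^ k * centralBinom (m - k) * (m + k).choose k`, so that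
`4 ^ m * d m i = ∑ k, c m k * k.choose i`. The `c m k` satisfy the first-order recurrence
`(m + 1) c (m + 1) k = 4 (m + k) c m (k - 1) + 2 (2m - 2k + 1) c m k`, which follows from
`(j + 1) C(2j + 2, j + 1) = 2 (2j + 1) C(2j, j)` and two binomial shifts. It rewrites the sum for
`d (m + 1) i` as a sum over the `c m k`, and the claimed identity then holds term by term, by
Pascal's rule and `(i + 1) C(k, i + 1) = (k - i) C(k, i)`.
-/

open Finset

/-- Extended by zero for `k > m`, so that the recurrences below hold for every `k`. -/
def bmCoeff (m k : ℕ) : ℕ :=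
  if k ≤ m then 2 ^ k * (m - k).centralBinom * (m + k).choose k else 0

theorem bmCoeff_of_lt {m k : ℕ} (h : m < k) : bmCoeff m k = 0 :=
  if_neg (Nat.not_le.mpr h)

section
variable {R : Type*} [CommRing R]

theorem succ_mul_bmCoeff_succ_zero (m : ℕ) :
    ((m : R) + 1) * bmCoeff (m + 1) 0 = 2 * (2 * m + 1) * bmCoeff m 0 := by
  simpa [bmCoeff] using congrArg (Nat.cast : ℕ → R) (Nat.succ_mul_centralBinom_succ m)

theorem succ_mul_bmCoeff_succ_succ (m k : ℕ) :
    ((m : R) + 1) * bmCoeff (m + 1) (k + 1)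
      = 4 * (m + k + 1) * bmCoeff m k + 2 * (2 * m - 2 * k - 1) * bmCoeff m (k + 1) := by
  rcases lt_trichotomy k m with hk | rfl | hk
  · obtain ⟨j, rfl⟩ := Nat.exists_eq_add_of_lt hk
    simp only [bmCoeff, if_pos (by omega : k ≤ k + j + 1), if_pos (by omega : k + 1 ≤ k + j + 1),
      if_pos (by omega : k + 1 ≤ k + j + 1 + 1),
      show k + j + 1 - k = j + 1 by omega, show k + j + 1 + 1 - (k + 1) = j + 1 by omega,
      show k + j + 1 - (k + 1) = j by omega]
    have hB := congrArg (Nat.cast : ℕ → R) (Nat.succ_mul_centralBinom_succ j)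
    have hC₁ := congrArg (Nat.cast : ℕ → R) (Nat.add_one_mul_choose_eq (k + j + 1 + k) k)
    have hC₂ := congrArg (Nat.cast : ℕ → R) (Nat.choose_mul_succ_eq (k + j + 1 + k + 1) (k + 1))
    rw [show k + j + 1 + k + 1 + 1 - (k + 1) = k + j + 2 by omega] at hC₂
    push_cast at hB hC₁ hC₂ ⊢
    rw [show k + j + 1 + 1 + (k + 1) = k + j + 1 + k + 1 + 1 by omega,
      show k + j + 1 + (k + 1) = k + j + 1 + k + 1 by omega]
    linear_combination (-2 * 2 ^ k * ((j + 1).centralBinom : R)) * hC₂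
      - 4 * 2 ^ k * ((j + 1).centralBinom : R) * hC₁
      + 2 * 2 ^ k * ((k + j + 1 + k + 1).choose (k + 1) : R) * hB
  · have hB := congrArg (Nat.cast : ℕ → R) (Nat.succ_mul_centralBinom_succ k)
    simp only [Nat.centralBinom_eq_two_mul_choose, two_mul] at hB
    rw [bmCoeff_of_lt (Nat.lt_succ_self k)]
    simp only [bmCoeff, le_refl, if_true, Nat.sub_self, Nat.centralBinom_zero]
    push_cast at hB ⊢
    linear_combination 2 * 2 ^ k * hB
  · rw [bmCoeff_of_lt hk, bmCoeff_of_lt (by omega : m < k + 1),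
      bmCoeff_of_lt (by omega : m + 1 < k + 1)]
    simp

theorem succ_mul_sum_bmCoeff_succ (m : ℕ) (f : ℕ → R) :
    ((m : R) + 1) * ∑ k ∈ range (m + 2), (bmCoeff (m + 1) k : R) * f k
      = ∑ k ∈ range (m + 1),
          (bmCoeff m k : R) * (4 * (m + k + 1) * f (k + 1) + 2 * (2 * m - 2 * k + 1) * f k) := by
  set g : ℕ → R := fun k ↦ 2 * (2 * m - 2 * k + 1) * bmCoeff m k * f k
  have hg : ∑ k ∈ range (m + 1), g k = ∑ k ∈ range (m + 1), g (k + 1) + g 0 := by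
    rw [← sum_range_succ', sum_range_succ g (m + 1)]
    simp [g, bmCoeff_of_lt (Nat.lt_succ_self m)]
  have hsplit : ∑ k ∈ range (m + 1),
      (bmCoeff m k : R) * (4 * (m + k + 1) * f (k + 1) + 2 * (2 * m - 2 * k + 1) * f k)
      = ∑ k ∈ range (m + 1), 4 * (m + k + 1) * bmCoeff m k * f (k + 1)
        + ∑ k ∈ range (m + 1), g k := by
    rw [← sum_add_distrib]
    exact sum_congr rfl fun k _ ↦ by ring
  rw [hsplit, hg, sum_range_succ', mul_add, mul_sum, ← add_assoc, ← sum_add_distrib]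
  simp only [g, ← mul_assoc, succ_mul_bmCoeff_succ_succ, succ_mul_bmCoeff_succ_zero]
  push_cast
  congr 1
  · exact sum_congr rfl fun k _ ↦ by ring
  · ring

theorem cast_add_one_mul_choose_succ (k i : ℕ) :
    ((i : R) + 1) * k.choose (i + 1) = ((k : R) - i) * k.choose i := by
  have hrec := congrArg (Nat.cast : ℕ → R) (Nat.add_one_mul_choose_eq k i)
  have hpascal := congrArg (Nat.cast : ℕ → R) (Nat.choose_succ_succ' k i)
  push_cast at hrec hpascal
  linear_combination -hrec - ((i : R) + 1) * hpascal

theorem succ_mul_sum_bmCoeff_mul_choose (m n : ℕ) :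
    ((m : R) + 1) * ∑ k ∈ range (m + 2), (bmCoeff (m + 1) k : R) * k.choose (n + 1)
      = 4 * ((m : R) + n + 1) * ∑ k ∈ range (m + 1), (bmCoeff m k : R) * k.choose n
        + 2 * (4 * (m : R) + 2 * n + 5)
          * ∑ k ∈ range (m + 1), (bmCoeff m k : R) * k.choose (n + 1) := by
  rw [succ_mul_sum_bmCoeff_succ, mul_sum, mul_sum, ← sum_add_distrib]
  refine sum_congr rfl fun k _ ↦ ?_
  have hpascal := congrArg (Nat.cast : ℕ → R) (Nat.choose_succ_succ' k n)
  push_cast at hpascal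
  linear_combination (4 * ((m : R) + k + 1) * bmCoeff m k) * hpascal
    - 4 * (bmCoeff m k : R) * cast_add_one_mul_choose_succ (R := R) k n
end

theorem d_natCast (m n : ℕ) :
    d m n = ((2 : ℝ) ^ (2 * m))⁻¹ * ∑ k ∈ range (m + 1), (bmCoeff m k : ℝ) * k.choose n := by
  unfold d
  split_ifs with h
  · rw [Int.toNat_natCast]
    congr 1
    rw [← sum_subset (s₁ := Icc n m) (s₂ := range (m + 1))
      (fun k hk ↦ by simp at hk ⊢; omega) fun k _ hk ↦ ?_]
    · refine sum_congr rfl fun k hk ↦ ?_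
      rw [bmCoeff, if_pos (mem_Icc.1 hk).2, Nat.centralBinom_eq_two_mul_choose, Nat.mul_sub]
      push_cast
      ring
    · simp_all [Nat.choose_eq_zero_of_lt]
  · refine (mul_eq_zero_of_right _ (sum_eq_zero fun k hk ↦ ?_)).symm
    rw [Nat.choose_eq_zero_of_lt (by simp at hk; omega), Nat.cast_zero, mul_zero]

theorem boros_moll_L3_general (m : ℕ) (i : ℤ) (h0 : 1 ≤ i) :
    d m (i - 1) = ((m + 1 : ℝ) / (m + i)) * d (m + 1) i
      - ((4 * m + 2 * i + 3 : ℝ) / (2 * (m + i))) * d m i := by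
  obtain ⟨n, rfl⟩ : ∃ n : ℕ, i = (n + 1 : ℕ) := ⟨(i - 1).toNat, by omega⟩
  have key := succ_mul_sum_bmCoeff_mul_choose (R := ℝ) m n
  rw [show ((n + 1 : ℕ) : ℤ) - 1 = n by push_cast; ring, d_natCast, d_natCast, d_natCast]
  push_cast
  field_simp
  rw [show 2 * (m + 1) = 2 * m + 2 by ring, pow_add]
  linear_combination (-2 * (2 : ℝ) ^ (2 * m)) * key

theorem boros_moll_L3 (m : ℕ) (i : ℤ) (hm : 2 ≤ m) (h0 : 1 ≤ i) (h1 : i ≤ (m : ℤ) - 1) :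
    d m (i - 1) = ((m + 1 : ℝ) / (m + i)) * d (m + 1) i
      - ((4 * m + 2 * i + 3 : ℝ) / (2 * (m + i))) * d m i :=
  boros_moll_L3_general m i h0
end
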